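/- The linear span of the set of functions { y ↦ 1_{(−∞, t]}(y)·Σ(e^{(y−t)D} w) : t ∈ ℝ, w ∈ W } is dense in L²(ℝ; W); that is, the explicit dilation is minimal. -/

import Mathlib

/-!
If `f ∈ L²(ℝ; W)` is orthogonal to every generator, then, moving `Σ` and `e^{(y-t)D}` to the other
side of the inner product, `∫_{y ≤ t} e^{(y-t)D*} Σ f(y) dy = 0` for every `t`. Applying `e^{tD*}`,
the primitive `t ↦ ∫_{y ≤ t} e^{yD*} Σ f(y) dy` vanishes identically, so by the Lebesgue
differentiation theorem `e^{yD*} Σ f(y) = 0`, i.e. `Σ f(y) = 0`, for a.e. `y`; as `Σ² = D + D*` is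
injective, `f = 0`. All integrals converge because `D` and `D*` are coercive,
`⟨Du, u⟩ ≥ c‖u‖²` with `c > 0`, which gives the decay `‖e^{sD}‖ ≤ e^{cs}` for `s ≤ 0`.
-/

open MeasureTheory RealInnerProductSpace NormedSpace Set

section Coercive

variable {W : Type*} [NormedAddCommGroup W] [InnerProductSpace ℝ W]

theorem exists_pos_mul_norm_sq_le_inner_self [FiniteDimensional ℝ W] {T : W →L[ℝ] W}
    (hT : ∀ w, w ≠ 0 → 0 < ⟪T w, w⟫) : ∃ c, 0 < c ∧ ∀ u, c * ‖u‖ ^ 2 ≤ ⟪T u, u⟫ := by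
  obtain ⟨c, hc, hcT⟩ := (isCompact_sphere (0 : W) 1).exists_forall_le'
    (T.continuous.inner continuous_id).continuousOn
    fun v hv => hT v (ne_zero_of_mem_unit_sphere ⟨v, hv⟩)
  refine ⟨c, hc, fun u => ?_⟩
  rcases eq_or_ne u 0 with rfl | hu
  · simp
  have h := hcT _ (show ‖u‖⁻¹ • u ∈ Metric.sphere (0 : W) 1 by simp [norm_smul, hu])
  rw [id, map_smul, real_inner_smul_left, real_inner_smul_right,
    show ‖u‖⁻¹ * (‖u‖⁻¹ * ⟪T u, u⟫) = ⟪T u, u⟫ / ‖u‖ ^ 2 by field_simp] at h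
  exact (le_div_iff₀ (by positivity)).1 h

theorem inner_adjoint_apply_self [CompleteSpace W] (T : W →L[ℝ] W) (w : W) :
    ⟪T.adjoint w, w⟫ = ⟪T w, w⟫ := by
  rw [ContinuousLinearMap.adjoint_inner_left, real_inner_comm]

end Coercive

section ExpSmul

variable {W : Type*} [NormedAddCommGroup W] [InnerProductSpace ℝ W] [CompleteSpace W]

theorem continuous_exp_smul (B : W →L[ℝ] W) : Continuous fun s : ℝ => exp (s • B) :=
  continuous_iff_continuousAt.2 fun s => (hasDerivAt_exp_smul_const' (𝕂 := ℝ) B s).continuousAt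

theorem exp_smul_apply_exp_smul (B : W →L[ℝ] W) (a b : ℝ) (x : W) :
    exp (a • B) (exp (b • B) x) = exp ((a + b) • B) x := by
  have hr (y : W →L[ℝ] W) : y ∈ Metric.eball 0 (expSeries ℝ (W →L[ℝ] W)).radius :=
    (expSeries_radius_eq_top ℝ (W →L[ℝ] W)).symm ▸ edist_lt_top _ _
  rw [← mul_apply_eq_comp, ← exp_add_of_commute_of_mem_ball
    (((Commute.refl B).smul_left a).smul_right b) (hr _) (hr _), add_smul]

theorem exp_smul_apply_injective (B : W →L[ℝ] W) (a : ℝ) :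
    Function.Injective (exp (a • B) : W →L[ℝ] W) :=
  Function.LeftInverse.injective (g := ⇑(exp ((-a) • B) : W →L[ℝ] W)) fun x => by
    rw [exp_smul_apply_exp_smul, neg_add_cancel, zero_smul, exp_zero, one_apply_eq_self]

theorem adjoint_exp_smul (B : W →L[ℝ] W) (s : ℝ) :
    (exp (s • B) : W →L[ℝ] W).adjoint = exp (s • B.adjoint) := by
  rw [← ContinuousLinearMap.star_eq_adjoint, ← ContinuousLinearMap.star_eq_adjoint, star_exp,
    star_smul, star_trivial]

variable {B : W →L[ℝ] W} {c : ℝ}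

/-- `r ↦ e^{-2cr} ‖e^{rB} x‖²` is monotone: `‖e^{rB} x‖²` has derivative `2⟪B u, u⟫ ≥ 2c‖u‖²`. -/
theorem norm_exp_smul_apply_le_of_nonpos (hB : ∀ u, c * ‖u‖ ^ 2 ≤ ⟪B u, u⟫) (x : W) {s : ℝ}
    (hs : s ≤ 0) : ‖exp (s • B) x‖ ≤ Real.exp (c * s) * ‖x‖ := by
  set u : ℝ → W := fun r => exp (r • B) x
  have hu (r : ℝ) : HasDerivAt u (B (u r)) r := by
    simpa using (hasDerivAt_exp_smul_const' (𝕂 := ℝ) B r).clm_apply (hasDerivAt_const r x)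
  have hψ (r : ℝ) : HasDerivAt (fun r => Real.exp (-(2 * c * r)) * ‖u r‖ ^ 2)
      (Real.exp (-(2 * c * r)) * (2 * (⟪B (u r), u r⟫ - c * ‖u r‖ ^ 2))) r := by
    refine (((hasDerivAt_id' r).const_mul (2 * c)).neg.exp.mul (hu r).norm_sq).congr_deriv ?_
    simp only [Pi.neg_apply]; rw [real_inner_comm]; ring
  have hmono : Monotone fun r => Real.exp (-(2 * c * r)) * ‖u r‖ ^ 2 :=
    monotone_of_deriv_nonneg (fun r => (hψ r).differentiableAt) fun r => by
      rw [(hψ r).deriv]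
      have := hB (u r)
      exact mul_nonneg (Real.exp_pos _).le (by linarith)
  have key : Real.exp (-(2 * c * s)) * ‖u s‖ ^ 2 ≤ ‖x‖ ^ 2 := by simpa [u] using hmono hs
  refine (pow_le_pow_iff_left₀ (norm_nonneg _) (by positivity) two_ne_zero).1 ?_
  calc ‖u s‖ ^ 2 = Real.exp (c * s) ^ 2 * (Real.exp (-(2 * c * s)) * ‖u s‖ ^ 2) := by
        rw [← mul_assoc, ← Real.exp_nat_mul, ← Real.exp_add]; ring_nf; simp
    _ ≤ (Real.exp (c * s) * ‖x‖) ^ 2 := by rw [mul_pow]; gcongr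

end ExpSmul

theorem memLp_two_exp_mul_sub {c : ℝ} (hc : 0 < c) (t : ℝ) :
    MemLp (fun y => Real.exp (c * (y - t))) 2 (volume.restrict (Iic t)) := by
  rw [memLp_two_iff_integrable_sq (by fun_prop)]
  refine IntegrableOn.congr_fun ((integrableOn_exp_mul_Iic (by positivity : 0 < 2 * c) t).mul_const
    (Real.exp (-(2 * c * t)))) (fun y _ => ?_) measurableSet_Iic
  rw [sq, ← Real.exp_add, ← Real.exp_add]; ring_nf

theorem ae_eq_zero_of_forall_setIntegral_Iic_eq_zero {E : Type*} [NormedAddCommGroup E]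
    [NormedSpace ℝ E] [CompleteSpace E] {g : ℝ → E} (hg : ∀ t, IntegrableOn g (Iic t))
    (h : ∀ t, ∫ y in Iic t, g y = 0) : g =ᵐ[volume] 0 := by
  have hloc : LocallyIntegrable g := (locallyIntegrable_iff).2 fun k hk =>
    (hg (hk.bddAbove.some)).mono_set fun y hy => hk.bddAbove.some_mem hy
  have hprim : (fun x => ∫ y in (0 : ℝ)..x, g y) = fun _ => 0 := funext fun x => by
    rw [← intervalIntegral.integral_Iic_sub_Iic (hg 0) (hg x), h, h, sub_zero]
  filter_upwards [LocallyIntegrable.ae_hasDerivAt_integral hloc] with x hx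
  have hx0 := hx 0
  rw [hprim] at hx0
  exact hx0.unique (hasDerivAt_const x 0)

section Volterra

variable {W : Type*} [NormedAddCommGroup W] [InnerProductSpace ℝ W] [CompleteSpace W]
  {B : W →L[ℝ] W} {c : ℝ}

theorem aestronglyMeasurable_exp_smul_apply (B : W →L[ℝ] W) {f : ℝ → W} {μ : Measure ℝ}
    (hf : AEStronglyMeasurable f μ) (t : ℝ) :
    AEStronglyMeasurable (fun y => exp ((y - t) • B) (f y)) μ :=
  (ContinuousLinearMap.apply ℝ W).flip.aestronglyMeasurable_comp₂
    ((continuous_exp_smul B).comp (continuous_id.sub continuous_const)).aestronglyMeasurable hf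

theorem memLp_indicator_Iic_exp_smul_apply (hc : 0 < c) (hB : ∀ u, c * ‖u‖ ^ 2 ≤ ⟪B u, u⟫)
    (t : ℝ) (x : W) : MemLp ((Iic t).indicator fun y => exp ((y - t) • B) x) 2 volume := by
  rw [memLp_indicator_iff_restrict measurableSet_Iic]
  refine ((memLp_two_exp_mul_sub hc t).const_mul ‖x‖).of_le
    (aestronglyMeasurable_exp_smul_apply B aestronglyMeasurable_const t) ?_
  refine (ae_restrict_iff' measurableSet_Iic).2 (ae_of_all _ fun y hy => ?_)
  rw [Real.norm_of_nonneg (by positivity), mul_comm]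
  exact norm_exp_smul_apply_le_of_nonpos hB x (sub_nonpos.2 hy)

theorem integrableOn_Iic_exp_smul_apply (hc : 0 < c) (hB : ∀ u, c * ‖u‖ ^ 2 ≤ ⟪B u, u⟫)
    {f : ℝ → W} (hf : MemLp f 2 volume) (t : ℝ) :
    IntegrableOn (fun y => exp ((y - t) • B) (f y)) (Iic t) := by
  refine ((memLp_two_exp_mul_sub hc t).integrable_mul (hf.norm.restrict _)).mono'
    (aestronglyMeasurable_exp_smul_apply B hf.1.restrict t) ?_
  refine (ae_restrict_iff' measurableSet_Iic).2 (ae_of_all _ fun y hy => ?_)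
  exact norm_exp_smul_apply_le_of_nonpos hB (f y) (sub_nonpos.2 hy)

/-- Undoing the shift `e^{-tB}` turns the hypothesis into the vanishing of the primitive of
`y ↦ e^{yB} f y`. -/
theorem ae_eq_zero_of_forall_setIntegral_Iic_exp_smul_eq_zero (hc : 0 < c)
    (hB : ∀ u, c * ‖u‖ ^ 2 ≤ ⟪B u, u⟫) {f : ℝ → W} (hf : MemLp f 2 volume)
    (h : ∀ t, ∫ y in Iic t, exp ((y - t) • B) (f y) = 0) : f =ᵐ[volume] 0 := by
  have hshift (t y : ℝ) : exp ((y - t) • B) (f y) = exp ((-t) • B) (exp (y • B) (f y)) := by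
    rw [exp_smul_apply_exp_smul, neg_add_eq_sub]
  have hint (t : ℝ) : IntegrableOn (fun y => exp (y • B) (f y)) (Iic t) := by
    simpa [IntegrableOn, exp_smul_apply_exp_smul] using
      (exp (t • B)).integrable_comp (integrableOn_Iic_exp_smul_apply hc hB hf t)
  have hzero := ae_eq_zero_of_forall_setIntegral_Iic_eq_zero hint fun t =>
    exp_smul_apply_injective B (-t) <| by
      rw [← ContinuousLinearMap.integral_comp_comm _ (hint t), map_zero, ← h t]
      simp only [hshift]
  filter_upwards [hzero] with y hy
  exact exp_smul_apply_injective B y (hy.trans (map_zero _).symm)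

theorem memLp_indicator_Iic_clm_exp_smul_apply {F : Type*} [NormedAddCommGroup F]
    [NormedSpace ℝ F] (hc : 0 < c) (hB : ∀ u, c * ‖u‖ ^ 2 ≤ ⟪B u, u⟫) (L : W →L[ℝ] F) (t : ℝ)
    (x : W) :
    MemLp ((Iic t).indicator fun y => L (exp ((y - t) • B) x)) 2 volume := by
  have h := L.comp_memLp' (memLp_indicator_Iic_exp_smul_apply hc hB t x)
  rwa [← Set.indicator_comp_of_zero (map_zero L)] at h

theorem inner_eq_inner_setIntegral_Iic_exp_smul_adjoint {F : Type*} [NormedAddCommGroup F]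
    [InnerProductSpace ℝ F] [CompleteSpace F] {L : W →L[ℝ] F} {t : ℝ} {w : W}
    {g f : Lp F 2 (volume : Measure ℝ)}
    (hg : g =ᵐ[volume] (Iic t).indicator fun y => L (exp ((y - t) • B) w))
    (hf : IntegrableOn (fun y => exp ((y - t) • B.adjoint) (L.adjoint (f y))) (Iic t)) :
    ⟪g, f⟫ = ⟪w, ∫ y in Iic t, exp ((y - t) • B.adjoint) (L.adjoint (f y))⟫ := by
  rw [L2.inner_def, ← integral_inner hf, ← integral_indicator measurableSet_Iic]
  refine integral_congr_ae (hg.mono fun y hy => ?_)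
  by_cases hyt : y ∈ Iic t
  · simp [hy, hyt, ← adjoint_exp_smul, ContinuousLinearMap.adjoint_inner_right]
  · simp [hy, hyt]

end Volterra

theorem explicit_dilation_minimal_general
    {W : Type*} [NormedAddCommGroup W] [InnerProductSpace ℝ W] [FiniteDimensional ℝ W]
    (D : W →L[ℝ] W)
    (hpos : ∀ w : W, w ≠ 0 → 0 < ⟪(D + ContinuousLinearMap.adjoint D) w, w⟫)
    (Sig : W →L[ℝ] W)
    (hSigsa : ContinuousLinearMap.adjoint Sig = Sig)
    (hSigsq : Sig ∘L Sig = D + ContinuousLinearMap.adjoint D) :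
    Dense (↑(Submodule.span ℝ
      {g : Lp W 2 (volume : Measure ℝ) |
        ∃ (t : ℝ) (w : W), ∀ᵐ y : ℝ ∂volume,
          g y = Set.indicator (Set.Iic t)
            (fun y => Sig (NormedSpace.exp ((y - t) • D) w)) y}) :
      Set (Lp W 2 (volume : Measure ℝ))) := by
  obtain ⟨c, hc, hcT⟩ := exists_pos_mul_norm_sq_le_inner_self hpos
  have hD (u : W) : c / 2 * ‖u‖ ^ 2 ≤ ⟪D u, u⟫ := by
    have := hcT u
    rw [add_apply, inner_add_left, inner_adjoint_apply_self] at this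
    linarith
  have hA (u : W) : c / 2 * ‖u‖ ^ 2 ≤ ⟪D.adjoint u, u⟫ := by
    rw [inner_adjoint_apply_self]; exact hD u
  rw [Submodule.dense_iff_topologicalClosure_eq_top, Submodule.topologicalClosure_eq_top_iff,
    Submodule.eq_bot_iff]
  intro f hf
  have hSf : MemLp (fun y => Sig.adjoint (f y)) 2 volume := Sig.adjoint.comp_memLp' (Lp.memLp f)
  have hint := integrableOn_Iic_exp_smul_apply (half_pos hc) hA hSf
  have horth (t : ℝ) : ∫ y in Iic t, exp ((y - t) • D.adjoint) (Sig.adjoint (f y)) = 0 :=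
    ext_inner_left ℝ fun w => by
      have hg := (memLp_indicator_Iic_clm_exp_smul_apply (half_pos hc) hD Sig t w).coeFn_toLp
      rw [inner_zero_right, ← inner_eq_inner_setIntegral_Iic_exp_smul_adjoint hg (hint t)]
      exact (Submodule.mem_orthogonal _ f).1 hf _ (Submodule.subset_span ⟨t, w, hg⟩)
  have hSf0 := ae_eq_zero_of_forall_setIntegral_Iic_exp_smul_eq_zero (half_pos hc) hA hSf horth
  refine Lp.eq_zero_iff_ae_eq_zero.2 (hSf0.mono fun y hy => by_contra fun hne => ?_)
  have hy' : Sig (f y) = 0 := hSigsa ▸ hy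
  have := hpos _ hne
  rw [← hSigsq, ContinuousLinearMap.comp_apply, hy', map_zero, inner_zero_left] at this
  exact lt_irrefl _ this

/-- Let `W` be a finite-dimensional real inner product space,
`D : W → W` a linear map with `⟨(D + D*)w, w⟩ > 0` for `w ≠ 0`, and `Σ` the
self-adjoint positive semidefinite square root of `D + D*`.  Then the linear span
of the functions `y ↦ 1_{(−∞, t]}(y) · Σ(e^{(y−t)D} w)`, for `t ∈ ℝ` and `w ∈ W`,
is dense in `L²(ℝ; W)`; that is, the explicit dilation is minimal. -/
theorem explicit_dilation_minimal
    {W : Type*} [NormedAddCommGroup W] [InnerProductSpace ℝ W] [FiniteDimensional ℝ W]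
    (D : W →L[ℝ] W)
    (hpos : ∀ w : W, w ≠ 0 → 0 < ⟪(D + ContinuousLinearMap.adjoint D) w, w⟫)
    (Sig : W →L[ℝ] W)
    (hSigsa : ContinuousLinearMap.adjoint Sig = Sig)
    (hSigpos : ∀ w : W, 0 ≤ ⟪Sig w, w⟫)
    (hSigsq : Sig ∘L Sig = D + ContinuousLinearMap.adjoint D) :
    Dense (↑(Submodule.span ℝ
      {g : Lp W 2 (volume : Measure ℝ) |
        ∃ (t : ℝ) (w : W), ∀ᵐ y : ℝ ∂volume,
          g y = Set.indicator (Set.Iic t)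
            (fun y => Sig (NormedSpace.exp ((y - t) • D) w)) y}) :
      Set (Lp W 2 (volume : Measure ℝ))) :=
  explicit_dilation_minimal_general D hpos Sig hSigsa hSigsq
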